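/- Let (X,d) be a metric space and f : X → X an F_c-contraction with associated point u0 ∈ X, constant t > 0 and function F ∈ 𝔽. Suppose there exists a point u ∈ X with fu ≠ u, and let σ = inf{ d(u,fu) : u ∈ X, fu ≠ u }. Then f fixes the whole closed disc D_{u0,σ} = {u ∈ X : d(u,u0) ≤ σ}, i.e. fu = u for every u ∈ X with d(u,u0) ≤ σ; in particular the center u0 of every fixed circle of f of the form C_{u0,r}, r ≤ σ, is itself fixed by f. -/

import Mathlib

/-!
A point `u` moved by `f` is moved by at least `σ`, by the definition of `σ`, but by strictly less
than `d(u₀, u)`: the contraction inequality gives `F (d(u, f u)) < F (d(u₀, u))` because `t > 0`,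
and `F` is strictly increasing. Hence `d(u, u₀) > σ`.
-/

open Filter Topology

theorem StrictMonoOn.lt_of_add_le_Ioi {F : ℝ → ℝ} (hF : StrictMonoOn F (Set.Ioi 0))
    {t a b : ℝ} (ht : 0 < t) (ha : 0 < a) (hb : 0 < b) (h : t + F a ≤ F b) : a < b :=
  (hF.lt_iff_lt ha hb).mp (by linarith)

theorem dist_apply_lt_dist_of_Fc {X : Type*} [MetricSpace X] {f : X → X} {F : ℝ → ℝ}
    {t : ℝ} {u0 : X} (hF : StrictMonoOn F (Set.Ioi 0)) (ht : 0 < t)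
    (hFc : ∀ u : X, 0 < dist u (f u) → 0 < dist u0 u ∧ t + F (dist u (f u)) ≤ F (dist u0 u))
    {u : X} (hu : f u ≠ u) : dist u (f u) < dist u0 u := by
  have hmoved : 0 < dist u (f u) := dist_pos.mpr (Ne.symm hu)
  obtain ⟨hcenter, hineq⟩ := hFc u hmoved
  exact hF.lt_of_add_le_Ioi ht hmoved hcenter hineq

theorem sInf_displacement_le {X : Type*} [PseudoMetricSpace X] {f : X → X} {u : X} (hu : f u ≠ u) :
    sInf {d : ℝ | ∃ u : X, f u ≠ u ∧ d = dist u (f u)} ≤ dist u (f u) :=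
  csInf_le ⟨0, by rintro _ ⟨v, -, rfl⟩; exact dist_nonneg⟩ ⟨u, hu, rfl⟩

theorem Fc_contraction_fixed_disc_general {X : Type*} [MetricSpace X]
    (f : X → X) (F : ℝ → ℝ) (t : ℝ) (u0 : X)
    (hF1 : StrictMonoOn F (Set.Ioi (0:ℝ)))
    (ht : 0 < t)
    (hFc : ∀ u : X, 0 < dist u (f u) →
      0 < dist u0 u ∧ t + F (dist u (f u)) ≤ F (dist u0 u))
    (σ : ℝ) (hσ : σ = sInf {d : ℝ | ∃ u : X, f u ≠ u ∧ d = dist u (f u)}) :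
    ∀ u : X, dist u u0 ≤ σ → f u = u := by
  intro u hu
  by_contra hmoved
  have hσ_le : σ ≤ dist u (f u) := hσ ▸ sInf_displacement_le hmoved
  have hlt := dist_apply_lt_dist_of_Fc hF1 ht hFc hmoved
  rw [dist_comm] at hu
  linarith

/-- Remark 3.1: if `f` is an `F_c`-contraction with point `u₀` and
`σ = inf {d(u, f u) : u ∈ X, f u ≠ u}`, then `f` fixes the whole closed disc
`D_{u₀,σ}`; in particular the common center `u₀` of the fixed circles
`C_{u₀,r}`, `r ≤ σ`, is itself fixed by `f`. -/
theorem Fc_contraction_fixed_disc {X : Type*} [MetricSpace X]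
    (f : X → X) (F : ℝ → ℝ) (t : ℝ) (u0 : X)
    (hF1 : StrictMonoOn F (Set.Ioi (0:ℝ)))
    (hF2 : ∀ α : ℕ → ℝ, (∀ n, 0 < α n) →
      (Tendsto α atTop (𝓝 0) ↔ Tendsto (fun n => F (α n)) atTop atBot))
    (hF3 : ∃ k : ℝ, 0 < k ∧ k < 1 ∧
      Tendsto (fun x : ℝ => x ^ k * F x) (𝓝[>] 0) (𝓝 0))
    (ht : 0 < t)
    (hFc : ∀ u : X, 0 < dist u (f u) →
      0 < dist u0 u ∧ t + F (dist u (f u)) ≤ F (dist u0 u))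
    (hex : ∃ u : X, f u ≠ u)
    (σ : ℝ) (hσ : σ = sInf {d : ℝ | ∃ u : X, f u ≠ u ∧ d = dist u (f u)}) :
    ∀ u : X, dist u u0 ≤ σ → f u = u :=
  Fc_contraction_fixed_disc_general f F t u0 hF1 ht hFc σ hσ
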